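/- For every d ≥ 1 there exists a constant C(d) < ∞ with the following property. Let ω be a translation-invariant random subgraph of Z^d and, conditionally on ω, let (Y_i)_{i≥0} be a simple random walk started at the origin on the connected component of the origin in ω whenever the origin is a vertex of ω with at least one ω-neighbour, and set Y_i = 0 for all i ≥ 0 otherwise. Then E[ max_{0 ≤ i ≤ n} ‖Y_i‖_∞² ] ≤ C(d) · n for every n ≥ 1. (This is the diffusive maximal displacement bound obtained from the maximal Markov-type 2 inequality for R^d.) -/

import Mathlib

/-!
Decompose each coordinate of the walk as `Y = M + A`, where `M` is a martingale and `A` the sum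
of the one-step drifts. For every environment, Doob's `L²` inequality bounds
`E[max_{k ≤ n} M_k²]` by `4 E[M_n²] ≤ 16 n`. The drift `A` has no such bound by itself, but under the
degree-biased annealed law the walk, reversed from time `n` and seen from its endpoint, has the
same law as the walk itself (reversibility of the walk and translation invariance of the
environment). In `2 Y_i = M_i - M'_n + M'_{n-i} + (drift terms bounded by 1)`, with `M'` the
martingale of the reversed walk, the drifts of the two directions cancel, so the forward
estimate applied twice bounds `E[max_i ‖Y_i‖²]`. The degree bias costs at most the factor
`3^d ≥ deg(0)`.
-/

open MeasureTheory
open scoped ENNReal Classical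

noncomputable section

namespace ArborealGas

/-- The degree of a vertex in a graph. -/
def graphDeg {V : Type*} (G : SimpleGraph V) (v : V) : ℕ := (G.neighborSet v).ncard

/-- One-step transition probability of the simple random walk on `G`. -/
def stepProb {V : Type*} (G : SimpleGraph V) (a b : V) : ℝ≥0∞ :=
  if G.Adj a b then ((graphDeg G a : ℝ≥0∞))⁻¹ else 0

/-- `n`-step transition probabilities of the simple random walk on `G`. -/
def transN {V : Type*} (G : SimpleGraph V) : ℕ → V → V → ℝ≥0∞
  | 0 => fun a b => if a = b then 1 else 0
  | n + 1 => fun a b => ∑' c, transN G n a c * stepProb G c b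

/-- `G` is transient: the expected number of visits of the simple random walk to its
starting point is finite. -/
def Transient {V : Type*} (G : SimpleGraph V) : Prop :=
  ∀ v : V, (∑' n : ℕ, transN G n v v) ≠ ⊤

/-- The probability that a doubly-infinite simple random walk on `G` started at `u`
agrees with the path `x` on the time window `[-a, b]`. -/
def walkCylWeight {V : Type*} (G : SimpleGraph V) (u : V) (a b : ℕ) (x : ℤ → V) : ℝ≥0∞ :=
  (if x 0 = u then 1 else 0) *
    (∏ i ∈ Finset.range b, stepProb G (x (i : ℤ)) (x ((i : ℤ) + 1))) *
    (∏ i ∈ Finset.range a, stepProb G (x (-(i : ℤ))) (x (-(i : ℤ) - 1)))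

/-- `μ` is the joint law `P^G_{u,v}` of two independent doubly-infinite simple random walks
`X` and `Y` on `G` started at `u` and `v`, characterized by its cylinder probabilities. -/
def IsDoubleWalkLaw {V : Type*} [MeasurableSpace V] (G : SimpleGraph V) (u v : V)
    (μ : Measure ((ℤ → V) × (ℤ → V))) : Prop :=
  IsProbabilityMeasure μ ∧
  ∀ (a b c d : ℕ) (x y : ℤ → V),
    μ {ω | (∀ i : ℤ, -(a : ℤ) ≤ i → i ≤ (b : ℤ) → ω.1 i = x i) ∧
           (∀ j : ℤ, -(c : ℤ) ≤ j → j ≤ (d : ℤ) → ω.2 j = y j)}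
      = walkCylWeight G u a b x * walkCylWeight G v c d y

/-- The σ-algebra on the space of subgraphs of `G`: the product (cylinder) σ-algebra. -/
instance subgraphMeasurableSpace {V : Type*} (G : SimpleGraph V) :
    MeasurableSpace G.Subgraph :=
  MeasurableSpace.comap
    (fun S => ((fun v => v ∈ S.verts), S.Adj) :
      G.Subgraph → (V → Prop) × (V → V → Prop)) inferInstance

/-- The degree of a vertex inside a subgraph. -/
def subDeg {V : Type*} {G : SimpleGraph V} (S : G.Subgraph) (v : V) : ℕ :=
  {w | S.Adj v w}.ncard

/-- One-step transition probability of the simple random walk on the subgraph `S`. -/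
def stepIn {V : Type*} {G : SimpleGraph V} (S : G.Subgraph) (a b : V) : ℝ≥0∞ :=
  if S.Adj a b then ((subDeg S a : ℝ≥0∞))⁻¹ else 0

/-- The probability that the simple random walk on the subgraph `S` started at `v`
agrees with the path `x` on the time window `[0, n]`. -/
def srwCylIn {V : Type*} {G : SimpleGraph V} (S : G.Subgraph) (v : V) (n : ℕ)
    (x : ℕ → V) : ℝ≥0∞ :=
  (if x 0 = v then 1 else 0) * ∏ i ∈ Finset.range n, stepIn S (x i) (x (i + 1))

/-- `n`-step transition probabilities of the simple random walk on the subgraph `S`. -/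
def transNIn {V : Type*} {G : SimpleGraph V} (S : G.Subgraph) : ℕ → V → V → ℝ≥0∞
  | 0 => fun a b => if a = b then 1 else 0
  | n + 1 => fun a b => ∑' c, transNIn S n a c * stepIn S c b

/-- The Green's function of the simple random walk on the subgraph `S`. -/
def green {V : Type*} {G : SimpleGraph V} (S : G.Subgraph) (a b : V) : ℝ≥0∞ :=
  ∑' n : ℕ, transNIn S n a b

/-- The hypercubic lattice `ℤ^d`: vertices `Fin d → ℤ`, edges between points at
`ℓ¹`-distance one. -/
def ZdGraph (d : ℕ) : SimpleGraph (Fin d → ℤ) where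
  Adj x y := ∑ i, (x i - y i).natAbs = 1
  symm := by
    constructor
    intro x y h
    rw [← h]
    exact Finset.sum_congr rfl fun i _ => by omega
  loopless := by constructor; intro x h; simp at h

/-- Translation of subgraphs of `ℤ^d` by a lattice vector `t`. -/
def translateSub {d : ℕ} (t : Fin d → ℤ) (S : (ZdGraph d).Subgraph) :
    (ZdGraph d).Subgraph where
  verts := {v | v - t ∈ S.verts}
  Adj u v := S.Adj (u - t) (v - t)
  adj_sub := by
    intro u v h
    have h2 := S.adj_sub h
    simpa [ZdGraph, sub_sub_sub_cancel_right] using h2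
  edge_vert := by intro u v h; exact S.edge_vert h
  symm := ⟨fun _ _ h => S.symm.symm _ _ h⟩

/-- The subgraph of `G` induced by a set `I` of vertices. -/
def traceSub {V : Type*} (G : SimpleGraph V) (I : Set V) : G.Subgraph where
  verts := I
  Adj u v := G.Adj u v ∧ u ∈ I ∧ v ∈ I
  adj_sub h := h.1
  edge_vert h := h.2.1
  symm := ⟨fun _ _ h => ⟨h.1.symm, h.2.2, h.2.1⟩⟩

open Classical in
/-- The conditional cylinder probability, given the environment `S`, of the walk started at
the origin: if the origin has at least one `S`-neighbour this is the cylinder probability of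
the simple random walk on the component of the origin in `S`; otherwise the walk is frozen
at the origin. -/
def originCondCyl (d : ℕ) (S : (ZdGraph d).Subgraph) (n : ℕ)
    (x : ℕ → Fin d → ℤ) : ℝ≥0∞ :=
  if ∃ b, S.Adj 0 b then srwCylIn S 0 n x
  else if ∀ i ≤ n, x i = 0 then 1 else 0

/-- `μ` is the joint law of a random environment `ω` with law `P` together with (conditionally
on `ω`) a simple random walk started at the origin on the component of the origin in `ω`
(frozen at the origin if the origin has no `ω`-neighbour). -/
def IsEnvWalkLaw (d : ℕ) (P : Measure (ZdGraph d).Subgraph)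
    (μ : Measure ((ZdGraph d).Subgraph × (ℕ → Fin d → ℤ))) : Prop :=
  IsProbabilityMeasure μ ∧ μ.map Prod.fst = P ∧
  ∀ B : Set (ZdGraph d).Subgraph, MeasurableSet B → ∀ (n : ℕ) (x : ℕ → Fin d → ℤ),
    μ (B ×ˢ {ω | ∀ i ≤ n, ω i = x i}) = ∫⁻ S in B, originCondCyl d S n x ∂P

/-- The supremum norm `‖x‖_∞` of a point of `ℤ^d`. -/
def supNormZ {d : ℕ} (x : Fin d → ℤ) : ℕ := Finset.univ.sup fun j => (x j).natAbs

/-- `μ₂` is the joint law of two conditionally independent simple random walks on the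
subgraph `Γ`, both started at `v`, characterized by its cylinder probabilities. -/
def IsPairSRWOn {V : Type*} [MeasurableSpace V] {G : SimpleGraph V} (Γ : G.Subgraph)
    (v : V) (μ₂ : Measure ((ℕ → V) × (ℕ → V))) : Prop :=
  IsProbabilityMeasure μ₂ ∧
  ∀ (n m : ℕ) (x y : ℕ → V),
    μ₂ {ω | (∀ i ≤ n, ω.1 i = x i) ∧ (∀ j ≤ m, ω.2 j = y j)}
      = srwCylIn Γ v n x * srwCylIn Γ v m y

open Finset

lemma sum_piFinset_snoc {α M : Type*} [AddCommMonoid M] (T : Finset α) (k : ℕ)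
    (G : (Fin (k + 1) → α) → M) :
    ∑ x ∈ Fintype.piFinset (fun _ : Fin (k + 1) => T), G x
      = ∑ x ∈ Fintype.piFinset (fun _ : Fin k => T), ∑ v ∈ T, G (Fin.snoc x v) := by
  rw [← Finset.sum_product']
  refine Finset.sum_nbij' (fun x => (Fin.init x, x (Fin.last k))) (fun p => Fin.snoc p.1 p.2)
    ?_ ?_ ?_ ?_ ?_
  · intro x hx
    rw [Fintype.mem_piFinset] at hx
    exact Finset.mem_product.2 ⟨Fintype.mem_piFinset.2 fun i => hx _, hx _⟩
  · intro p hp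
    obtain ⟨hp1, hp2⟩ := Finset.mem_product.1 hp
    refine Fintype.mem_piFinset.2 fun i => Fin.lastCases ?_ (fun i => ?_) i
    · rw [Fin.snoc_last]; exact hp2
    · rw [Fin.snoc_castSucc]; exact Fintype.mem_piFinset.1 hp1 i
  all_goals simp

lemma partialSups_congr {α : Type*} [SemilatticeSup α] {f g : ℕ → α} {n : ℕ}
    (h : ∀ k ≤ n, f k = g k) : partialSups f n = partialSups g n := by
  simp only [partialSups_apply]
  exact Finset.sup'_congr _ rfl fun k hk => h k (Finset.mem_Iic.1 hk)

lemma sum_partialSups_mul_sub_add (s : ℕ → ℝ) (n : ℕ) :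
    (∑ k ∈ range n, partialSups s k * (s (k + 1) - s k))
      + ∑ k ∈ range n, s (k + 1) * (partialSups s (k + 1) - partialSups s k)
      = partialSups s n * s n - s 0 * s 0 := by
  induction n with
  | zero => simp
  | succ n ih =>
    rw [Finset.sum_range_succ, Finset.sum_range_succ, partialSups_add_one]
    linear_combination ih

lemma sq_partialSups_sub_le (s : ℕ → ℝ) (n : ℕ) :
    partialSups s n ^ 2 - s 0 ^ 2
      ≤ 2 * ∑ k ∈ range n, s (k + 1) * (partialSups s (k + 1) - partialSups s k) := by
  induction n with
  | zero => simp
  | succ n ih =>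
    rw [Finset.sum_range_succ, partialSups_add_one]
    rcases le_total (s (n + 1)) (partialSups s n) with h | h
    · rw [sup_eq_left.2 h]
      nlinarith
    · rw [sup_eq_right.2 h]
      nlinarith [sq_nonneg (s (n + 1) - partialSups s n)]

/-- Doob's `L²` maximal inequality, pathwise: the sum has nonnegative expectation when `s` is a
nonnegative submartingale. -/
lemma sq_partialSups_le (s : ℕ → ℝ) (n : ℕ) :
    partialSups s n ^ 2
      ≤ 4 * s n ^ 2 - 4 * ∑ k ∈ range n, partialSups s k * (s (k + 1) - s k) := by
  have h1 := sum_partialSups_mul_sub_add s n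
  have h2 := sq_partialSups_sub_le s n
  have h3 : s n ≤ partialSups s n := le_partialSups s n
  nlinarith [sq_nonneg (2 * s n - partialSups s n), sq_nonneg (s 0)]

variable {d : ℕ}

lemma natAbs_sub_le_one_of_adj {u v : Fin d → ℤ} (h : (ZdGraph d).Adj u v) (j : Fin d) :
    (u j - v j).natAbs ≤ 1 :=
  (Finset.single_le_sum (fun _ _ => Nat.zero_le _) (Finset.mem_univ j)).trans_eq h

lemma abs_sub_le_one_of_adj {u v : Fin d → ℤ} (h : (ZdGraph d).Adj u v) (j : Fin d) :
    |(v j : ℝ) - u j| ≤ 1 := by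
  have : |u j - v j| ≤ 1 := by
    rw [Int.abs_eq_natAbs]; exact_mod_cast natAbs_sub_le_one_of_adj h j
  rw [abs_sub_comm]
  exact_mod_cast this

def unitBox (d : ℕ) : Finset (Fin d → ℤ) := Fintype.piFinset fun _ => Finset.Icc (-1 : ℤ) 1

lemma sub_mem_unitBox_of_adj {u v : Fin d → ℤ} (h : (ZdGraph d).Adj u v) :
    v - u ∈ unitBox d := by
  simp only [unitBox, Fintype.mem_piFinset, Finset.mem_Icc, Pi.sub_apply]
  intro j
  have := natAbs_sub_le_one_of_adj h j
  omega

section StepKernel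

variable {S : (ZdGraph d).Subgraph} {u v : Fin d → ℤ}

lemma subDeg_eq_card_filter (S : (ZdGraph d).Subgraph) (u : Fin d → ℤ) :
    subDeg S u = ((unitBox d).filter fun e => S.Adj u (u + e)).card := by
  have hset : {w | S.Adj u w} = (u + ·) '' ↑((unitBox d).filter fun e => S.Adj u (u + e)) := by
    ext w
    refine ⟨fun h => ⟨w - u, Finset.mem_filter.2
      ⟨sub_mem_unitBox_of_adj (S.adj_sub h), by simpa using h⟩, by simp⟩, ?_⟩
    rintro ⟨e, he, rfl⟩
    exact (Finset.mem_filter.1 he).2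
  rw [subDeg, hset, Set.ncard_image_of_injective _ (add_right_injective u),
    Set.ncard_coe_finset]

lemma subDeg_le_card_unitBox (S : (ZdGraph d).Subgraph) (u : Fin d → ℤ) :
    subDeg S u ≤ (unitBox d).card := by
  rw [subDeg_eq_card_filter]
  exact Finset.card_filter_le _ _

lemma subDeg_pos_of_adj (h : S.Adj u v) : 0 < subDeg S u := by
  rw [subDeg_eq_card_filter]
  exact Finset.card_pos.2 ⟨v - u, Finset.mem_filter.2
    ⟨sub_mem_unitBox_of_adj (S.adj_sub h), by simpa using h⟩⟩

def stepInReal (S : (ZdGraph d).Subgraph) (u v : Fin d → ℤ) : ℝ :=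
  if S.Adj u v then (subDeg S u : ℝ)⁻¹ else 0

lemma stepInReal_nonneg (S : (ZdGraph d).Subgraph) (u v : Fin d → ℤ) :
    0 ≤ stepInReal S u v := by
  unfold stepInReal; split <;> positivity

lemma adj_of_stepInReal_ne_zero (h : stepInReal S u v ≠ 0) : S.Adj u v := by
  by_contra hc
  exact h (if_neg hc)

lemma stepIn_eq_ofReal_stepInReal (S : (ZdGraph d).Subgraph) (u v : Fin d → ℤ) :
    stepIn S u v = ENNReal.ofReal (stepInReal S u v) := by
  unfold stepIn stepInReal
  split_ifs with h
  · have : (0 : ℝ) < subDeg S u := by exact_mod_cast subDeg_pos_of_adj h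
    rw [ENNReal.ofReal_inv_of_pos this, ENNReal.ofReal_natCast]
  · simp

lemma subDeg_mul_stepInReal (S : (ZdGraph d).Subgraph) (u v : Fin d → ℤ) :
    (subDeg S u : ℝ) * stepInReal S u v = if S.Adj u v then 1 else 0 := by
  unfold stepInReal
  split_ifs with h
  · exact mul_inv_cancel₀ (by exact_mod_cast (subDeg_pos_of_adj h).ne')
  · exact mul_zero _

lemma subDeg_mul_stepInReal_comm (S : (ZdGraph d).Subgraph) (u v : Fin d → ℤ) :
    (subDeg S u : ℝ) * stepInReal S u v = subDeg S v * stepInReal S v u := by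
  simp only [subDeg_mul_stepInReal, S.adj_comm]

/-- The mean of `g` after one step from `u`; it is `0` when `u` is isolated in `S`. -/
def stepMean (S : (ZdGraph d).Subgraph) (u : Fin d → ℤ) (g : (Fin d → ℤ) → ℝ) : ℝ :=
  ∑ e ∈ unitBox d, stepInReal S u (u + e) * g (u + e)

lemma sum_stepInReal_mul_eq_stepMean {T : Finset (Fin d → ℤ)}
    (hT : ∀ v, S.Adj u v → v ∈ T) (g : (Fin d → ℤ) → ℝ) :
    ∑ v ∈ T, stepInReal S u v * g v = stepMean S u g := by
  have hzero : ∀ v, ¬ S.Adj u v → stepInReal S u v * g v = 0 := fun v hv => by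
    rw [stepInReal, if_neg hv, zero_mul]
  rw [stepMean, ← Finset.sum_filter_of_ne (p := fun v => S.Adj u v)
      (fun v _ h => not_not.1 (mt (hzero v) h)),
    ← Finset.sum_filter_of_ne (p := fun e => S.Adj u (u + e))
      (fun e _ h => not_not.1 (mt (hzero (u + e)) h))]
  refine Finset.sum_nbij' (fun v => v - u) (fun e => u + e) ?_ ?_ ?_ ?_ ?_ <;>
    simp only [Finset.mem_filter, add_sub_cancel, add_sub_cancel_left]
  · exact fun v hv => ⟨sub_mem_unitBox_of_adj (S.adj_sub hv.2), hv.2⟩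
  · exact fun e he => ⟨hT _ he.2, he.2⟩
  all_goals simp

lemma stepMean_const (h : 0 < subDeg S u) (c : ℝ) : stepMean S u (fun _ => c) = c := by
  have hsum : ∑ e ∈ unitBox d, stepInReal S u (u + e) = 1 := by
    rw [← mul_right_inj' (show (subDeg S u : ℝ) ≠ 0 by exact_mod_cast h.ne'), Finset.mul_sum]
    simp only [subDeg_mul_stepInReal, mul_one]
    rw [Finset.sum_boole, subDeg_eq_card_filter]
  rw [stepMean, ← Finset.sum_mul, hsum, one_mul]

lemma stepMean_add (g h : (Fin d → ℤ) → ℝ) :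
    stepMean S u (fun v => g v + h v) = stepMean S u g + stepMean S u h := by
  simp only [stepMean, mul_add, Finset.sum_add_distrib]

lemma stepMean_sub (g h : (Fin d → ℤ) → ℝ) :
    stepMean S u (fun v => g v - h v) = stepMean S u g - stepMean S u h := by
  simp only [stepMean, mul_sub, Finset.sum_sub_distrib]

lemma stepMean_const_mul (c : ℝ) (g : (Fin d → ℤ) → ℝ) :
    stepMean S u (fun v => c * g v) = c * stepMean S u g := by
  simp only [stepMean, Finset.mul_sum]
  exact Finset.sum_congr rfl fun _ _ => by ring

lemma stepMean_mono {g h : (Fin d → ℤ) → ℝ} (hgh : ∀ v, S.Adj u v → g v ≤ h v) :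
    stepMean S u g ≤ stepMean S u h := by
  refine Finset.sum_le_sum fun e _ => ?_
  by_cases hadj : S.Adj u (u + e)
  · exact mul_le_mul_of_nonneg_left (hgh _ hadj) (stepInReal_nonneg _ _ _)
  · simp [stepInReal, hadj]

lemma abs_stepMean_le (g : (Fin d → ℤ) → ℝ) :
    |stepMean S u g| ≤ stepMean S u fun v => |g v| := by
  refine (Finset.abs_sum_le_sum_abs _ _).trans_eq (Finset.sum_congr rfl fun e _ => ?_)
  rw [abs_mul, abs_of_nonneg (stepInReal_nonneg _ _ _)]

def drift (S : (ZdGraph d).Subgraph) (u : Fin d → ℤ) (j : Fin d) : ℝ :=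
  stepMean S u fun v => (v j : ℝ) - u j

lemma abs_drift_le_one (S : (ZdGraph d).Subgraph) (u : Fin d → ℤ) (j : Fin d) :
    |drift S u j| ≤ 1 := by
  rcases (subDeg S u).eq_zero_or_pos with h | h
  · have : ∀ v, ¬ S.Adj u v := fun v hv => (subDeg_pos_of_adj hv).ne' h
    simp [drift, stepMean, stepInReal, this]
  · calc |drift S u j| ≤ stepMean S u fun v => |(v j : ℝ) - u j| := abs_stepMean_le _
      _ ≤ stepMean S u fun _ => 1 :=
        stepMean_mono fun v hv => abs_sub_le_one_of_adj (S.adj_sub hv) j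
      _ = 1 := stepMean_const h 1

lemma stepMean_increment_sub_drift (h : 0 < subDeg S u) (j : Fin d) :
    (stepMean S u fun v => (v j : ℝ) - u j - drift S u j) = 0 := by
  rw [stepMean_sub, stepMean_const h, drift, sub_self]

lemma subDeg_translateSub (t : Fin d → ℤ) (S : (ZdGraph d).Subgraph) (u : Fin d → ℤ) :
    subDeg (translateSub t S) u = subDeg S (u - t) := by
  have hset : {w | (translateSub t S).Adj u w} = (· + t) '' {w | S.Adj (u - t) w} := by
    ext w
    refine ⟨fun h => ⟨w - t, h, sub_add_cancel w t⟩, ?_⟩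
    rintro ⟨w, h, rfl⟩
    change S.Adj (u - t) (w + t - t)
    rwa [add_sub_cancel_right]
  rw [subDeg, subDeg, hset, Set.ncard_image_of_injective _ (add_left_injective t)]

lemma stepInReal_translateSub (t : Fin d → ℤ) (S : (ZdGraph d).Subgraph) (u v : Fin d → ℤ) :
    stepInReal (translateSub t S) u v = stepInReal S (u - t) (v - t) := by
  rw [stepInReal, stepInReal, subDeg_translateSub]
  rfl

lemma drift_translateSub (t : Fin d → ℤ) (S : (ZdGraph d).Subgraph) (u : Fin d → ℤ)
    (j : Fin d) : drift (translateSub t S) u j = drift S (u - t) j := by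
  refine Finset.sum_congr rfl fun e _ => ?_
  rw [stepInReal_translateSub, add_sub_right_comm]
  simp only [Pi.add_apply, Pi.sub_apply, Int.cast_add, Int.cast_sub]
  ring

end StepKernel

section Walk

variable {S : (ZdGraph d).Subgraph}

def seqWeight (S : (ZdGraph d).Subgraph) (k : ℕ) (y : ℕ → Fin d → ℤ) : ℝ :=
  (if y 0 = 0 then 1 else 0) * ∏ l ∈ range k, stepInReal S (y l) (y (l + 1))

lemma seqWeight_nonneg (S : (ZdGraph d).Subgraph) (k : ℕ) (y : ℕ → Fin d → ℤ) :
    0 ≤ seqWeight S k y :=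
  mul_nonneg (by split <;> norm_num) (Finset.prod_nonneg fun _ _ => stepInReal_nonneg _ _ _)

lemma seqWeight_congr {k : ℕ} {y y' : ℕ → Fin d → ℤ} (h : ∀ l ≤ k, y l = y' l) :
    seqWeight S k y = seqWeight S k y' := by
  rw [seqWeight, seqWeight, h 0 (Nat.zero_le k)]
  congr 1
  refine Finset.prod_congr rfl fun l hl => ?_
  rw [Finset.mem_range] at hl
  rw [h l hl.le, h (l + 1) hl]

lemma seqWeight_succ (S : (ZdGraph d).Subgraph) (k : ℕ) (y : ℕ → Fin d → ℤ) :
    seqWeight S (k + 1) y = seqWeight S k y * stepInReal S (y k) (y (k + 1)) := by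
  rw [seqWeight, seqWeight, Finset.prod_range_succ, mul_assoc]

lemma srwCylIn_eq_ofReal_seqWeight (S : (ZdGraph d).Subgraph) (k : ℕ)
    (y : ℕ → Fin d → ℤ) :
    srwCylIn S 0 k y = ENNReal.ofReal (seqWeight S k y) := by
  rw [srwCylIn, seqWeight, ENNReal.ofReal_mul (by split <;> norm_num),
    ENNReal.ofReal_prod_of_nonneg fun _ _ => stepInReal_nonneg _ _ _]
  congr 1
  · split <;> simp
  · exact Finset.prod_congr rfl fun _ _ => stepIn_eq_ofReal_stepInReal _ _ _

section Support

variable {k : ℕ} {y : ℕ → Fin d → ℤ}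

lemma eq_zero_of_seqWeight_ne_zero (h : seqWeight S k y ≠ 0) : y 0 = 0 := by
  by_contra hc
  exact h (by rw [seqWeight, if_neg hc, zero_mul])

lemma adj_of_seqWeight_ne_zero (h : seqWeight S k y ≠ 0) {l : ℕ} (hl : l < k) :
    S.Adj (y l) (y (l + 1)) :=
  adj_of_stepInReal_ne_zero <| Finset.prod_ne_zero_iff.1 (right_ne_zero_of_mul h) l
    (Finset.mem_range.2 hl)

lemma natAbs_le_of_seqWeight_ne_zero (h : seqWeight S k y ≠ 0) {l : ℕ} (hl : l ≤ k)
    (j : Fin d) : (y l j).natAbs ≤ l := by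
  induction l with
  | zero => simp [eq_zero_of_seqWeight_ne_zero h]
  | succ l ih =>
    have := natAbs_sub_le_one_of_adj (S.adj_sub (adj_of_seqWeight_ne_zero h hl)) j
    have := ih (by omega)
    omega

lemma subDeg_pos_of_seqWeight_ne_zero (h0 : 0 < subDeg S 0) (h : seqWeight S k y ≠ 0) :
    0 < subDeg S (y k) := by
  cases k with
  | zero => rwa [eq_zero_of_seqWeight_ne_zero h]
  | succ k => exact subDeg_pos_of_adj (adj_of_seqWeight_ne_zero h k.lt_succ_self).symm

end Support

def box (d n : ℕ) : Finset (Fin d → ℤ) := Fintype.piFinset fun _ => Icc (-(n : ℤ)) n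

def pathBox (d k : ℕ) : Finset (Fin (k + 1) → Fin d → ℤ) :=
  Fintype.piFinset fun _ => box d k

def pathSeq {k : ℕ} (x : Fin (k + 1) → Fin d → ℤ) : ℕ → Fin d → ℤ :=
  fun l => x ⟨min l k, by omega⟩

def extendSeq {α : Type*} (y : ℕ → α) (k : ℕ) (v : α) : ℕ → α :=
  fun l => if l ≤ k then y l else v

lemma pathSeq_of_le {k : ℕ} (x : Fin (k + 1) → Fin d → ℤ) {l : ℕ} (hl : l ≤ k) :
    pathSeq x l = x ⟨l, by omega⟩ := by
  simp only [pathSeq, min_eq_left hl]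

lemma pathSeq_zero {k : ℕ} (x : Fin (k + 1) → Fin d → ℤ) : pathSeq x 0 = x 0 :=
  pathSeq_of_le x (Nat.zero_le k)

lemma pathSeq_snoc {k : ℕ} (x : Fin (k + 1) → Fin d → ℤ) (v : Fin d → ℤ) :
    pathSeq (Fin.snoc x v : Fin (k + 2) → Fin d → ℤ) = extendSeq (pathSeq x) k v := by
  funext l
  by_cases hl : l ≤ k
  · rw [extendSeq, if_pos hl, pathSeq_of_le _ (by omega), pathSeq_of_le _ hl]
    exact Fin.snoc_castSucc (α := fun _ => Fin d → ℤ) v x ⟨l, by omega⟩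
  · have hlast : (⟨min l (k + 1), by omega⟩ : Fin (k + 2)) = Fin.last (k + 1) :=
      Fin.ext (by simp only [Fin.val_last]; omega)
    rw [extendSeq, if_neg hl, pathSeq, hlast]
    exact Fin.snoc_last (α := fun _ => Fin d → ℤ) v x

lemma extendSeq_of_le {α : Type*} (y : ℕ → α) {k l : ℕ} (v : α) (hl : l ≤ k) :
    extendSeq y k v l = y l := if_pos hl

lemma seqWeight_extendSeq (S : (ZdGraph d).Subgraph) (k : ℕ) (y : ℕ → Fin d → ℤ)
    (v : Fin d → ℤ) :
    seqWeight S (k + 1) (extendSeq y k v) = seqWeight S k y * stepInReal S (y k) v := by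
  rw [seqWeight_succ, seqWeight_congr fun l hl => extendSeq_of_le y v hl,
    extendSeq_of_le y v le_rfl, extendSeq, if_neg (by omega)]

lemma mem_pathBox_of_seqWeight_ne_zero {k : ℕ} {x : Fin (k + 1) → Fin d → ℤ}
    (h : seqWeight S k (pathSeq x) ≠ 0) : x ∈ pathBox d k := by
  refine Fintype.mem_piFinset.2 fun i => Fintype.mem_piFinset.2 fun j => ?_
  have hi := natAbs_le_of_seqWeight_ne_zero h i.is_le j
  rw [pathSeq_of_le x i.is_le, Fin.eta] at hi
  rw [Finset.mem_Icc]
  omega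

/-- `E^S_0[F(Y)]` for the walk `Y` stopped at time `k`, which stays in `box d k` up to then. -/
def walkExp (S : (ZdGraph d).Subgraph) (k : ℕ) (F : (ℕ → Fin d → ℤ) → ℝ) : ℝ :=
  ∑ x ∈ pathBox d k, seqWeight S k (pathSeq x) * F (pathSeq x)

section WalkExp

variable {k : ℕ}

lemma walkExp_zero (F : (ℕ → Fin d → ℤ) → ℝ) : walkExp S 0 F = F 0 := by
  have hbox : pathBox d 0 = {0} := by
    ext x
    simp only [pathBox, box, Fintype.mem_piFinset, CharP.cast_eq_zero, neg_zero,
      Finset.Icc_self, Finset.mem_singleton, funext_iff, Pi.zero_apply]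
  have hseq : pathSeq (0 : Fin 1 → Fin d → ℤ) = 0 := rfl
  simp [walkExp, hbox, hseq, seqWeight]

lemma walkExp_congr {F G : (ℕ → Fin d → ℤ) → ℝ}
    (h : ∀ y, seqWeight S k y ≠ 0 → F y = G y) : walkExp S k F = walkExp S k G := by
  refine Finset.sum_congr rfl fun x _ => ?_
  by_cases hx : seqWeight S k (pathSeq x) = 0
  · rw [hx, zero_mul, zero_mul]
  · rw [h _ hx]

lemma walkExp_mono {F G : (ℕ → Fin d → ℤ) → ℝ}
    (h : ∀ y, seqWeight S k y ≠ 0 → F y ≤ G y) : walkExp S k F ≤ walkExp S k G := by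
  refine Finset.sum_le_sum fun x _ => ?_
  by_cases hx : seqWeight S k (pathSeq x) = 0
  · rw [hx, zero_mul, zero_mul]
  · exact mul_le_mul_of_nonneg_left (h _ hx) (seqWeight_nonneg _ _ _)

lemma walkExp_nonneg {F : (ℕ → Fin d → ℤ) → ℝ}
    (h : ∀ y, seqWeight S k y ≠ 0 → 0 ≤ F y) :
    0 ≤ walkExp S k F := by
  have hzero : walkExp S k (fun _ => 0) = 0 := by simp [walkExp]
  exact hzero.ge.trans (walkExp_mono h)

lemma walkExp_add (F G : (ℕ → Fin d → ℤ) → ℝ) :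
    walkExp S k (fun y => F y + G y) = walkExp S k F + walkExp S k G := by
  simp only [walkExp, mul_add, Finset.sum_add_distrib]

lemma walkExp_sub (F G : (ℕ → Fin d → ℤ) → ℝ) :
    walkExp S k (fun y => F y - G y) = walkExp S k F - walkExp S k G := by
  simp only [walkExp, mul_sub, Finset.sum_sub_distrib]

lemma walkExp_const_mul (c : ℝ) (F : (ℕ → Fin d → ℤ) → ℝ) :
    walkExp S k (fun y => c * F y) = c * walkExp S k F := by
  simp only [walkExp, Finset.mul_sum]
  exact Finset.sum_congr rfl fun _ _ => by ring

lemma walkExp_sum {ι : Type*} (s : Finset ι) (F : ι → (ℕ → Fin d → ℤ) → ℝ) :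
    walkExp S k (fun y => ∑ i ∈ s, F i y) = ∑ i ∈ s, walkExp S k (F i) := by
  simp only [walkExp, Finset.mul_sum]
  exact Finset.sum_comm

lemma walkExp_succ (F : (ℕ → Fin d → ℤ) → ℝ) :
    walkExp S (k + 1) F = walkExp S k fun y => stepMean S (y k) fun v => F (extendSeq y k v) := by
  have hstep : ∀ x : Fin (k + 1) → Fin d → ℤ,
      ∑ v ∈ box d (k + 1), seqWeight S (k + 1) (pathSeq (Fin.snoc x v : Fin (k + 2) → _))
          * F (pathSeq (Fin.snoc x v : Fin (k + 2) → _))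
        = seqWeight S k (pathSeq x)
          * stepMean S (pathSeq x k) fun v => F (extendSeq (pathSeq x) k v) := by
    intro x
    by_cases hx : seqWeight S k (pathSeq x) = 0
    · simp [pathSeq_snoc, seqWeight_extendSeq, hx]
    have hnbr : ∀ v, S.Adj (pathSeq x k) v → v ∈ box d (k + 1) := fun v hv =>
      Fintype.mem_piFinset.2 fun j => by
        have h1 := natAbs_sub_le_one_of_adj (S.adj_sub hv) j
        have h2 := natAbs_le_of_seqWeight_ne_zero hx le_rfl j
        rw [Finset.mem_Icc]
        push_cast
        omega
    simp only [pathSeq_snoc, seqWeight_extendSeq, mul_assoc, ← Finset.mul_sum,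
      sum_stepInReal_mul_eq_stepMean hnbr]
  rw [walkExp, pathBox, sum_piFinset_snoc, walkExp]
  simp only [hstep]
  refine (Finset.sum_subset (fun x hx => Fintype.mem_piFinset.2 fun i =>
    Fintype.mem_piFinset.2 fun j => ?_) fun x _ hx => ?_).symm
  · have := Fintype.mem_piFinset.1 (Fintype.mem_piFinset.1 hx i) j
    rw [Finset.mem_Icc] at this ⊢
    push_cast
    omega
  · rw [not_imp_comm.1 mem_pathBox_of_seqWeight_ne_zero hx, zero_mul]

lemma walkExp_const (h0 : 0 < subDeg S 0) (c : ℝ) : walkExp S k (fun _ => c) = c := by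
  induction k with
  | zero => exact walkExp_zero _
  | succ k ih =>
    rw [walkExp_succ]
    exact (walkExp_congr fun y hy =>
      stepMean_const (subDeg_pos_of_seqWeight_ne_zero h0 hy) c).trans ih

lemma walkExp_eq_of_le {m : ℕ} (h0 : 0 < subDeg S 0) {F : (ℕ → Fin d → ℤ) → ℝ}
    (hF : ∀ y y', (∀ l ≤ m, y l = y' l) → F y = F y') (hmk : m ≤ k) :
    walkExp S k F = walkExp S m F := by
  induction k, hmk using Nat.le_induction with
  | base => rfl
  | succ k hmk ih =>
    rw [walkExp_succ, ← ih]
    refine walkExp_congr fun y hy => ?_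
    have hext : ∀ v, F (extendSeq y k v) = F y := fun v =>
      hF _ _ fun l hl => extendSeq_of_le y v (hl.trans hmk)
    simp only [hext]
    exact stepMean_const (subDeg_pos_of_seqWeight_ne_zero h0 hy) _

end WalkExp

end Walk

section Martingale

variable {S : (ZdGraph d).Subgraph}

def mart (S : (ZdGraph d).Subgraph) (y : ℕ → Fin d → ℤ) (k : ℕ) (j : Fin d) : ℝ :=
  (y k j : ℝ) - ∑ l ∈ range k, drift S (y l) j

lemma mart_congr {y y' : ℕ → Fin d → ℤ} {k : ℕ} (h : ∀ l ≤ k, y l = y' l)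
    (j : Fin d) :
    mart S y k j = mart S y' k j := by
  rw [mart, mart, h k le_rfl]
  congr 1
  exact Finset.sum_congr rfl fun l hl => by rw [h l (Finset.mem_range.1 hl).le]

lemma mart_extendSeq (y : ℕ → Fin d → ℤ) (k : ℕ) (v : Fin d → ℤ) (j : Fin d) :
    mart S (extendSeq y k v) (k + 1) j
      = mart S y k j + ((v j : ℝ) - y k j - drift S (y k) j) := by
  have hpre : ∑ l ∈ range k, drift S (extendSeq y k v l) j
      = ∑ l ∈ range k, drift S (y l) j :=
    Finset.sum_congr rfl fun l hl => by rw [extendSeq_of_le y v (Finset.mem_range.1 hl).le]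
  rw [mart, mart, Finset.sum_range_succ, hpre, extendSeq_of_le y v le_rfl, extendSeq,
    if_neg (by omega)]
  ring

lemma stepMean_mart_extendSeq {y : ℕ → Fin d → ℤ} {k : ℕ} (h : 0 < subDeg S (y k))
    (j : Fin d) :
    (stepMean S (y k) fun v => mart S (extendSeq y k v) (k + 1) j) = mart S y k j := by
  simp only [mart_extendSeq]
  rw [stepMean_add, stepMean_const h, stepMean_increment_sub_drift h, add_zero]

lemma abs_mart_le_stepMean {y : ℕ → Fin d → ℤ} {k : ℕ} (h : 0 < subDeg S (y k))
    (j : Fin d) :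
    |mart S y k j| ≤ stepMean S (y k) fun v => |mart S (extendSeq y k v) (k + 1) j| := by
  rw [← stepMean_mart_extendSeq h j]
  exact abs_stepMean_le _

lemma stepMean_mart_extendSeq_sq_le {y : ℕ → Fin d → ℤ} {k : ℕ} (h : 0 < subDeg S (y k))
    (j : Fin d) :
    (stepMean S (y k) fun v => mart S (extendSeq y k v) (k + 1) j ^ 2)
      ≤ mart S y k j ^ 2 + 4 := by
  set m := mart S y k j
  set D : (Fin d → ℤ) → ℝ := fun v => (v j : ℝ) - y k j - drift S (y k) j
  have hD : ∀ v, S.Adj (y k) v → D v ^ 2 ≤ 4 := fun v hv => by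
    have h1 := abs_le.1 (abs_sub_le_one_of_adj (S.adj_sub hv) j)
    have h2 := abs_le.1 (abs_drift_le_one S (y k) j)
    nlinarith
  have hsq : ∀ v, mart S (extendSeq y k v) (k + 1) j ^ 2 = m ^ 2 + (2 * m * D v + D v ^ 2) :=
    fun v => by rw [mart_extendSeq]; ring
  simp only [hsq]
  rw [stepMean_add, stepMean_const h, stepMean_add, stepMean_const_mul,
    stepMean_increment_sub_drift h, mul_zero, zero_add]
  linarith [(stepMean_mono hD).trans_eq (stepMean_const h 4)]

lemma walkExp_mart_sq_le (h0 : 0 < subDeg S 0) (j : Fin d) (k : ℕ) :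
    walkExp S k (fun y => mart S y k j ^ 2) ≤ 4 * k := by
  induction k with
  | zero => simp [walkExp_zero, mart]
  | succ k ih =>
    rw [walkExp_succ]
    calc _ ≤ walkExp S k (fun y => mart S y k j ^ 2 + 4) :=
          walkExp_mono fun y hy =>
            stepMean_mart_extendSeq_sq_le (subDeg_pos_of_seqWeight_ne_zero h0 hy) j
      _ ≤ 4 * (k + 1 : ℕ) := by
          rw [walkExp_add, walkExp_const h0]
          push_cast
          linarith

def maxAbsMart (S : (ZdGraph d).Subgraph) (n : ℕ) (j : Fin d) (y : ℕ → Fin d → ℤ) : ℝ :=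
  partialSups (fun k => |mart S y k j|) n

lemma maxAbsMart_nonneg (S : (ZdGraph d).Subgraph) (n : ℕ) (j : Fin d)
    (y : ℕ → Fin d → ℤ) :
    0 ≤ maxAbsMart S n j y :=
  (abs_nonneg _).trans (le_partialSups_of_le (fun k => |mart S y k j|) (Nat.zero_le n))

lemma abs_mart_le_maxAbsMart (S : (ZdGraph d).Subgraph) {n k : ℕ} (hk : k ≤ n) (j : Fin d)
    (y : ℕ → Fin d → ℤ) : |mart S y k j| ≤ maxAbsMart S n j y :=
  le_partialSups_of_le (fun k => |mart S y k j|) hk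

/-- `|mart|` is a submartingale and the running maximum up to time `k` is known at time `k`. -/
lemma walkExp_partialSups_mul_sub_nonneg (h0 : 0 < subDeg S 0) (j : Fin d) {k n : ℕ}
    (hk : k + 1 ≤ n) :
    0 ≤ walkExp S n fun y => partialSups (fun l => |mart S y l j|) k
      * (|mart S y (k + 1) j| - |mart S y k j|) := by
  have hM : ∀ y y' : ℕ → Fin d → ℤ, (∀ l ≤ k, y l = y' l) →
      partialSups (fun l => |mart S y l j|) k = partialSups (fun l => |mart S y' l j|) k :=
    fun y y' h => partialSups_congr fun l hl => by rw [mart_congr fun i hi => h i (hi.trans hl)]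
  rw [walkExp_eq_of_le h0 (m := k + 1) ?_ hk, walkExp_succ]
  · refine walkExp_nonneg fun y hy => ?_
    have hdeg := subDeg_pos_of_seqWeight_ne_zero h0 hy
    have hext : ∀ v, partialSups (fun l => |mart S (extendSeq y k v) l j|) k
        = partialSups (fun l => |mart S y l j|) k := fun v =>
      hM _ _ fun l hl => extendSeq_of_le y v hl
    have hext' : ∀ v, |mart S (extendSeq y k v) k j| = |mart S y k j| := fun v => by
      rw [mart_congr fun l hl => extendSeq_of_le y v hl]
    simp only [hext, hext', mul_sub]
    rw [stepMean_sub, stepMean_const_mul, stepMean_const hdeg, ← mul_sub]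
    exact mul_nonneg ((abs_nonneg (mart S y 0 j)).trans
        (le_partialSups_of_le (fun l => |mart S y l j|) (Nat.zero_le k)))
      (sub_nonneg.2 (abs_mart_le_stepMean hdeg j))
  · intro y y' h
    rw [hM y y' fun l hl => h l (by omega), mart_congr h, mart_congr fun l hl => h l (by omega)]

lemma walkExp_maxAbsMart_sq_le (h0 : 0 < subDeg S 0) (j : Fin d) (n : ℕ) :
    walkExp S n (fun y => maxAbsMart S n j y ^ 2) ≤ 16 * n := by
  have hcross : 0 ≤ ∑ k ∈ range n, walkExp S n fun y =>
      partialSups (fun l => |mart S y l j|) k * (|mart S y (k + 1) j| - |mart S y k j|) :=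
    Finset.sum_nonneg fun k hk =>
      walkExp_partialSups_mul_sub_nonneg h0 j (Finset.mem_range.1 hk)
  calc walkExp S n (fun y => maxAbsMart S n j y ^ 2)
      ≤ walkExp S n fun y => 4 * |mart S y n j| ^ 2 - 4 * ∑ k ∈ range n,
          partialSups (fun l => |mart S y l j|) k * (|mart S y (k + 1) j| - |mart S y k j|) :=
        walkExp_mono fun y _ => sq_partialSups_le _ n
    _ = 4 * walkExp S n (fun y => mart S y n j ^ 2) - 4 * ∑ k ∈ range n, walkExp S n fun y =>
          partialSups (fun l => |mart S y l j|) k * (|mart S y (k + 1) j| - |mart S y k j|) := by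
        simp only [walkExp_sub, walkExp_const_mul, walkExp_sum, sq_abs]
    _ ≤ 16 * n := by linarith [walkExp_mart_sq_le h0 j n]

end Martingale

lemma subDeg_mul_prod_stepInReal_reverse (S : (ZdGraph d).Subgraph) (y : ℕ → Fin d → ℤ)
    (k : ℕ) :
    (subDeg S (y 0) : ℝ) * ∏ l ∈ range k, stepInReal S (y l) (y (l + 1))
      = subDeg S (y k) * ∏ l ∈ range k, stepInReal S (y (l + 1)) (y l) := by
  induction k with
  | zero => simp
  | succ k ih =>
    rw [Finset.prod_range_succ, Finset.prod_range_succ]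
    linear_combination stepInReal S (y k) (y (k + 1)) * ih
      + (∏ l ∈ range k, stepInReal S (y (l + 1)) (y l))
        * subDeg_mul_stepInReal_comm S (y k) (y (k + 1))

def revSeq (n : ℕ) (y : ℕ → Fin d → ℤ) : ℕ → Fin d → ℤ := fun l => y (n - l) - y n

lemma subDeg_mul_seqWeight_revSeq (S : (ZdGraph d).Subgraph) {y : ℕ → Fin d → ℤ}
    (hy0 : y 0 = 0) (n : ℕ) :
    (subDeg S 0 : ℝ) * seqWeight S n y
      = subDeg (translateSub (-y n) S) 0 * seqWeight (translateSub (-y n) S) n (revSeq n y) := by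
  have hdeg : subDeg (translateSub (-y n) S) 0 = subDeg S (y n) := by
    rw [subDeg_translateSub, zero_sub, neg_neg]
  have hprod : ∏ l ∈ range n,
        stepInReal (translateSub (-y n) S) (revSeq n y l) (revSeq n y (l + 1))
      = ∏ l ∈ range n, stepInReal S (y (l + 1)) (y l) := by
    rw [← Finset.prod_range_reflect]
    refine Finset.prod_congr rfl fun l hl => ?_
    have hl := Finset.mem_range.1 hl
    simp only [revSeq, stepInReal_translateSub, sub_neg_eq_add, sub_add_cancel]
    rw [show n - (n - 1 - l) = l + 1 by omega, show n - (n - 1 - l + 1) = l by omega]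
  have hrev0 : revSeq n y 0 = 0 := sub_self _
  rw [seqWeight, seqWeight, if_pos hy0, if_pos hrev0, hdeg, hprod, one_mul, one_mul,
    ← hy0, subDeg_mul_prod_stepInReal_reverse]

lemma mart_revSeq (S : (ZdGraph d).Subgraph) (y : ℕ → Fin d → ℤ) (n k : ℕ) (j : Fin d) :
    mart (translateSub (-y n) S) (revSeq n y) k j
      = (y (n - k) j : ℝ) - y n j - ∑ l ∈ range k, drift S (y (n - l)) j := by
  simp only [mart, revSeq, drift_translateSub, sub_neg_eq_add, sub_add_cancel, Pi.sub_apply,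
    Int.cast_sub]

lemma sum_range_sub_reflect_eq (f : ℕ → ℝ) {i n : ℕ} (hi : i ≤ n) :
    ∑ l ∈ range n, f (n - l)
      = ∑ l ∈ range (n - i), f (n - l) + ∑ m ∈ range i, f (m + 1) := by
  induction i with
  | zero => simp
  | succ i ih =>
    rw [ih (by omega), show n - i = n - (i + 1) + 1 by omega, Finset.sum_range_succ,
      Finset.sum_range_succ, show n - (n - (i + 1)) = i + 1 by omega]
    ring

lemma two_mul_coord_eq (S : (ZdGraph d).Subgraph) {y : ℕ → Fin d → ℤ} (hy0 : y 0 = 0)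
    {i n : ℕ} (hi : i ≤ n) (j : Fin d) :
    2 * (y i j : ℝ) = mart S y i j - mart (translateSub (-y n) S) (revSeq n y) n j
      + mart (translateSub (-y n) S) (revSeq n y) (n - i) j + drift S (y 0) j
      - drift S (y i) j := by
  rw [mart_revSeq, mart_revSeq, Nat.sub_self,
    Nat.sub_sub_self hi, sum_range_sub_reflect_eq (fun l => drift S (y l) j) hi, mart]
  have hsum := Finset.sum_range_sub (fun l => drift S (y l) j) i
  rw [Finset.sum_sub_distrib] at hsum
  simp only [hy0, Pi.zero_apply, Int.cast_zero] at hsum ⊢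
  linarith

lemma two_mul_abs_coord_le (S : (ZdGraph d).Subgraph) {y : ℕ → Fin d → ℤ} (hy0 : y 0 = 0)
    {i n : ℕ} (hi : i ≤ n) (j : Fin d) :
    2 * |(y i j : ℝ)|
      ≤ maxAbsMart S n j y + 2 * maxAbsMart (translateSub (-y n) S) n j (revSeq n y) + 2 := by
  have h1 := abs_le.1 (abs_mart_le_maxAbsMart S hi j y)
  have h2 := abs_le.1 (abs_mart_le_maxAbsMart (translateSub (-y n) S) (le_refl n) j (revSeq n y))
  have h3 := abs_le.1
    (abs_mart_le_maxAbsMart (translateSub (-y n) S) (Nat.sub_le n i) j (revSeq n y))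
  have h4 := abs_le.1 (abs_drift_le_one S (y 0) j)
  have h5 := abs_le.1 (abs_drift_le_one S (y i) j)
  have h := two_mul_coord_eq S hy0 hi j
  rw [show 2 * |(y i j : ℝ)| = |2 * (y i j : ℝ)| by rw [abs_mul, abs_two], abs_le]
  constructor <;> linarith

/-- Adding back `x 0` makes the reversal an involution of all paths, not only of those
starting at the origin. -/
def reversePath {n : ℕ} (x : Fin (n + 1) → Fin d → ℤ) : Fin (n + 1) → Fin d → ℤ :=
  fun i => x i.rev - x (Fin.last n) + x 0

lemma reversePath_involutive (n : ℕ) :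
    Function.Involutive (reversePath : (Fin (n + 1) → Fin d → ℤ) → _) := by
  intro x
  funext i
  simp only [reversePath, Fin.rev_rev, Fin.rev_last, Fin.rev_zero]
  abel

lemma reversePath_zero {n : ℕ} (x : Fin (n + 1) → Fin d → ℤ) : reversePath x 0 = x 0 := by
  simp [reversePath]

lemma pathSeq_reversePath {n : ℕ} {x : Fin (n + 1) → Fin d → ℤ} (hx : x 0 = 0) :
    pathSeq (reversePath x) = revSeq n (pathSeq x) := by
  funext l
  simp only [pathSeq, reversePath, revSeq, hx, add_zero]
  congr 2
  · exact Fin.ext (by simp [Fin.val_rev]; omega)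
  · exact Fin.ext (by simp)

section Measurability

lemma measurable_verts_adj :
    Measurable fun S : (ZdGraph d).Subgraph =>
      ((fun w => w ∈ S.verts, S.Adj) :
        ((Fin d → ℤ) → Prop) × ((Fin d → ℤ) → (Fin d → ℤ) → Prop)) :=
  measurable_iff_comap_le.2 le_rfl

lemma measurableSet_adj (u v : Fin d → ℤ) :
    MeasurableSet {S : (ZdGraph d).Subgraph | S.Adj u v} :=
  ((measurable_pi_apply v).comp ((measurable_pi_apply u).comp
    (measurable_snd.comp measurable_verts_adj))) (MeasurableSpace.measurableSet_top (s := {p | p}))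

lemma measurable_translateSub (t : Fin d → ℤ) :
    Measurable (translateSub t : (ZdGraph d).Subgraph → (ZdGraph d).Subgraph) := by
  rintro _ ⟨A, hA, rfl⟩
  rw [← Set.preimage_comp]
  refine Measurable.prodMk (measurable_pi_lambda _ fun w => ?_)
    (measurable_pi_lambda _ fun u => measurable_pi_lambda _ fun v => ?_) hA
  · exact (measurable_pi_apply (w - t)).comp (measurable_fst.comp measurable_verts_adj)
  · exact (measurable_pi_apply (v - t)).comp ((measurable_pi_apply (u - t)).comp
      (measurable_snd.comp measurable_verts_adj))

lemma measurable_subDeg (u : Fin d → ℤ) :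
    Measurable fun S : (ZdGraph d).Subgraph => (subDeg S u : ℝ) := by
  simp only [subDeg_eq_card_filter, Finset.card_filter, Nat.cast_sum, Nat.cast_ite,
    Nat.cast_one, Nat.cast_zero]
  exact Finset.measurable_sum _ fun e _ =>
    Measurable.ite (measurableSet_adj _ _) measurable_const measurable_const

lemma measurable_stepInReal (u v : Fin d → ℤ) :
    Measurable fun S : (ZdGraph d).Subgraph => stepInReal S u v :=
  Measurable.ite (measurableSet_adj u v) (measurable_subDeg u).inv measurable_const

lemma measurable_seqWeight (k : ℕ) (y : ℕ → Fin d → ℤ) :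
    Measurable fun S : (ZdGraph d).Subgraph => seqWeight S k y :=
  (Finset.measurable_prod _ fun _ _ => measurable_stepInReal _ _).const_mul _

lemma measurable_maxAbsMart (n : ℕ) (j : Fin d) (y : ℕ → Fin d → ℤ) :
    Measurable fun S : (ZdGraph d).Subgraph => maxAbsMart S n j y := by
  simp only [maxAbsMart, partialSups_eq_sup'_range]
  refine Finset.measurable_range_sup'' fun k _ => (measurable_const.sub ?_).abs
  exact Finset.measurable_sum _ fun l _ => Finset.measurable_sum _ fun e _ =>
    (measurable_stepInReal _ _).mul measurable_const

lemma measurable_walkExp {k : ℕ} {G : (ZdGraph d).Subgraph → (ℕ → Fin d → ℤ) → ℝ}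
    (hG : ∀ y, Measurable fun S => G S y) :
    Measurable fun S : (ZdGraph d).Subgraph => walkExp S k (G S) :=
  Finset.measurable_sum _ fun _ _ => (measurable_seqWeight k _).mul (hG _)

lemma measurable_originCondCyl (n : ℕ) (y : ℕ → Fin d → ℤ) :
    Measurable fun S : (ZdGraph d).Subgraph => originCondCyl d S n y := by
  have hD : MeasurableSet {S : (ZdGraph d).Subgraph | ∃ b, S.Adj 0 b} := by
    simpa only [Set.ofPred_exists] using MeasurableSet.iUnion fun b => measurableSet_adj 0 b
  refine Measurable.ite hD ?_ measurable_const
  simp only [srwCylIn_eq_ofReal_seqWeight]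
  exact ENNReal.measurable_ofReal.comp (measurable_seqWeight n y)

end Measurability

def maxSupNormSq (n : ℕ) (y : ℕ → Fin d → ℤ) : ℝ≥0∞ :=
  ⨆ i ∈ range (n + 1), (supNormZ (y i) : ℝ≥0∞) ^ 2

lemma maxSupNormSq_congr {n : ℕ} {y y' : ℕ → Fin d → ℤ} (h : ∀ i ≤ n, y i = y' i) :
    maxSupNormSq n y = maxSupNormSq n y' :=
  iSup_congr fun i => iSup_congr fun hi => by rw [h i (Nat.lt_succ_iff.1 (Finset.mem_range.1 hi))]

lemma lintegral_maxSupNormSq_eq {P : Measure (ZdGraph d).Subgraph}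
    {μ : Measure ((ZdGraph d).Subgraph × (ℕ → Fin d → ℤ))} (hμ : IsEnvWalkLaw d P μ)
    (n : ℕ) :
    ∫⁻ ω, maxSupNormSq n ω.2 ∂μ
      = ∫⁻ S, ∑' x : Fin (n + 1) → Fin d → ℤ,
          maxSupNormSq n (pathSeq x) * originCondCyl d S n (pathSeq x) ∂P := by
  let cyl (x : Fin (n + 1) → Fin d → ℤ) :
      Set ((ZdGraph d).Subgraph × (ℕ → Fin d → ℤ)) :=
    Set.univ ×ˢ {y | ∀ i ≤ n, y i = pathSeq x i}
  have hcyl : ∀ x, MeasurableSet (cyl x) := fun x => MeasurableSet.univ.prod <| by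
    simp only [Set.ofPred_forall]
    exact MeasurableSet.iInter fun i => MeasurableSet.iInter fun _ =>
      measurableSet_eq_fun (measurable_pi_apply i) measurable_const
  have hpt : ∀ ω : (ZdGraph d).Subgraph × (ℕ → Fin d → ℤ), maxSupNormSq n ω.2
      = ∑' x, (cyl x).indicator (fun _ => maxSupNormSq n (pathSeq x)) ω := by
    intro ω
    let x₀ : Fin (n + 1) → Fin d → ℤ := fun i => ω.2 i
    have hx₀ : ∀ i ≤ n, ω.2 i = pathSeq x₀ i := fun i hi => by rw [pathSeq_of_le x₀ hi]
    rw [tsum_eq_single x₀ fun x hx => Set.indicator_of_notMem (fun hω => hx ?_) _,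
      Set.indicator_of_mem (show ω ∈ cyl x₀ from ⟨Set.mem_univ _, hx₀⟩),
      maxSupNormSq_congr hx₀]
    funext i
    have := (Set.mem_prod.1 hω).2 i i.is_le
    rwa [pathSeq_of_le x i.is_le, Fin.eta, eq_comm] at this
  simp only [hpt]
  rw [lintegral_tsum fun x => (measurable_const.indicator (hcyl x)).aemeasurable,
    lintegral_tsum fun x => ((measurable_originCondCyl n _).const_mul _).aemeasurable]
  refine tsum_congr fun x => ?_
  rw [lintegral_indicator_const (hcyl x), lintegral_const_mul _ (measurable_originCondCyl n _),
    hμ.2.2 Set.univ MeasurableSet.univ n (pathSeq x), Measure.restrict_univ]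

lemma supNormZ_sq_le_sum_sq (x : Fin d → ℤ) :
    (supNormZ x : ℝ) ^ 2 ≤ ∑ j, (x j : ℝ) ^ 2 := by
  rcases (Finset.univ : Finset (Fin d)).eq_empty_or_nonempty with h | h
  · simp [supNormZ, h]
  · obtain ⟨j, -, hj⟩ := Finset.exists_mem_eq_sup _ h fun j => (x j).natAbs
    rw [supNormZ, hj, Nat.cast_natAbs, Int.cast_abs, sq_abs]
    exact Finset.single_le_sum (fun j _ => sq_nonneg (x j : ℝ)) (Finset.mem_univ j)

def martBound (S : (ZdGraph d).Subgraph) (n : ℕ) (y : ℕ → Fin d → ℤ) : ℝ :=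
  ∑ j, (maxAbsMart S n j y ^ 2 + 1)

lemma martBound_nonneg (S : (ZdGraph d).Subgraph) (n : ℕ) (y : ℕ → Fin d → ℤ) :
    0 ≤ martBound S n y :=
  Finset.sum_nonneg fun _ _ => by positivity

lemma measurable_martBound (n : ℕ) (y : ℕ → Fin d → ℤ) :
    Measurable fun S : (ZdGraph d).Subgraph => martBound S n y :=
  Finset.measurable_sum _ fun j _ => ((measurable_maxAbsMart n j y).pow_const 2).add_const 1

def displacementBound (S : (ZdGraph d).Subgraph) (n : ℕ) (y : ℕ → Fin d → ℤ) : ℝ :=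
  martBound S n y + 3 * martBound (translateSub (-y n) S) n (revSeq n y)

lemma displacementBound_nonneg (S : (ZdGraph d).Subgraph) (n : ℕ) (y : ℕ → Fin d → ℤ) :
    0 ≤ displacementBound S n y :=
  add_nonneg (martBound_nonneg _ _ _) (mul_nonneg zero_le_three (martBound_nonneg _ _ _))

lemma maxSupNormSq_le (S : (ZdGraph d).Subgraph) {y : ℕ → Fin d → ℤ} (hy0 : y 0 = 0)
    (n : ℕ) :
    maxSupNormSq n y ≤ ENNReal.ofReal (displacementBound S n y) := by
  refine iSup₂_le fun i hi => ?_
  have hin : i ≤ n := Nat.lt_succ_iff.1 (Finset.mem_range.1 hi)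
  rw [← ENNReal.ofReal_natCast, ← ENNReal.ofReal_pow (Nat.cast_nonneg _)]
  refine ENNReal.ofReal_le_ofReal ((supNormZ_sq_le_sum_sq _).trans ?_)
  rw [displacementBound, martBound, martBound, Finset.mul_sum, ← Finset.sum_add_distrib]
  refine Finset.sum_le_sum fun j _ => ?_
  have ha := maxAbsMart_nonneg S n j y
  have hb := maxAbsMart_nonneg (translateSub (-y n) S) n j (revSeq n y)
  have hsq := pow_le_pow_left₀ (by positivity) (two_mul_abs_coord_le S hy0 hin j) 2
  rw [mul_pow, sq_abs] at hsq
  nlinarith [sq_nonneg (maxAbsMart S n j y - maxAbsMart (translateSub (-y n) S) n j (revSeq n y)),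
    sq_nonneg (maxAbsMart S n j y - 2),
    sq_nonneg (maxAbsMart (translateSub (-y n) S) n j (revSeq n y) - 1)]

lemma tsum_maxSupNormSq_mul_originCondCyl_le (S : (ZdGraph d).Subgraph) (n : ℕ)
    {F : (ℕ → Fin d → ℤ) → ℝ} (hF0 : ∀ y, 0 ≤ F y)
    (hF : ∀ y, y 0 = 0 → maxSupNormSq n y ≤ ENNReal.ofReal (F y)) :
    ∑' x : Fin (n + 1) → Fin d → ℤ,
        maxSupNormSq n (pathSeq x) * originCondCyl d S n (pathSeq x)
      ≤ ENNReal.ofReal (subDeg S 0 * walkExp S n F) := by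
  by_cases hS : ∃ b, S.Adj 0 b
  · obtain ⟨b, hb⟩ := hS
    have hdeg : (1 : ℝ) ≤ subDeg S 0 := by exact_mod_cast subDeg_pos_of_adj hb
    simp only [originCondCyl, if_pos (⟨b, hb⟩ : ∃ b, S.Adj 0 b), srwCylIn_eq_ofReal_seqWeight]
    rw [tsum_eq_sum (s := pathBox d n) fun x hx => by
      rw [not_imp_comm.1 mem_pathBox_of_seqWeight_ne_zero hx, ENNReal.ofReal_zero, mul_zero]]
    calc ∑ x ∈ pathBox d n,
          maxSupNormSq n (pathSeq x) * ENNReal.ofReal (seqWeight S n (pathSeq x))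
        ≤ ∑ x ∈ pathBox d n, ENNReal.ofReal (seqWeight S n (pathSeq x) * F (pathSeq x)) := by
          refine Finset.sum_le_sum fun x _ => ?_
          by_cases hw : seqWeight S n (pathSeq x) = 0
          · simp [hw]
          rw [mul_comm, ENNReal.ofReal_mul (seqWeight_nonneg _ _ _)]
          exact mul_le_mul_right (hF _ (eq_zero_of_seqWeight_ne_zero hw)) _
      _ = ENNReal.ofReal (walkExp S n F) :=
          (ENNReal.ofReal_sum_of_nonneg fun x _ => mul_nonneg (seqWeight_nonneg _ _ _) (hF0 _)).symm
      _ ≤ _ := ENNReal.ofReal_le_ofReal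
          (le_mul_of_one_le_left (walkExp_nonneg fun y _ => hF0 y) hdeg)
  · have hzero : ∀ x : Fin (n + 1) → Fin d → ℤ,
        maxSupNormSq n (pathSeq x) * originCondCyl d S n (pathSeq x) = 0 := by
      intro x
      rw [originCondCyl, if_neg hS]
      split_ifs with h
      · rw [maxSupNormSq_congr (y' := 0) h, mul_one]
        simp [maxSupNormSq, supNormZ]
      · rw [mul_zero]
    simp [hzero]

lemma ofReal_subDeg_mul_walkExp (S : (ZdGraph d).Subgraph) (n : ℕ)
    {F : (ℕ → Fin d → ℤ) → ℝ} (hF : ∀ y, 0 ≤ F y) :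
    ENNReal.ofReal (subDeg S 0 * walkExp S n F)
      = ∑' x : Fin (n + 1) → Fin d → ℤ,
          ENNReal.ofReal (subDeg S 0 * seqWeight S n (pathSeq x) * F (pathSeq x)) := by
  rw [walkExp, Finset.mul_sum, ENNReal.ofReal_sum_of_nonneg fun x _ => by
    have := seqWeight_nonneg S n (pathSeq x); have := hF (pathSeq x); positivity]
  rw [tsum_eq_sum (s := pathBox d n) fun x hx => by
    rw [not_imp_comm.1 mem_pathBox_of_seqWeight_ne_zero hx, mul_zero, zero_mul,
      ENNReal.ofReal_zero]]
  simp only [mul_assoc]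

lemma lintegral_subDeg_mul_walkExp_reverse {P : Measure (ZdGraph d).Subgraph}
    (hTI : ∀ t : Fin d → ℤ, P.map (translateSub t) = P) (n : ℕ)
    {G : (ZdGraph d).Subgraph → (ℕ → Fin d → ℤ) → ℝ}
    (hG : ∀ y, Measurable fun S => G S y)
    (hG0 : ∀ S y, 0 ≤ G S y) :
    ∫⁻ S, ENNReal.ofReal
        (subDeg S 0 * walkExp S n fun y => G (translateSub (-y n) S) (revSeq n y)) ∂P
      = ∫⁻ S, ENNReal.ofReal (subDeg S 0 * walkExp S n (G S)) ∂P := by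
  let T : (Fin (n + 1) → Fin d → ℤ) → (ZdGraph d).Subgraph → ℝ≥0∞ := fun x S =>
    ENNReal.ofReal (subDeg S 0 * seqWeight S n (pathSeq x) * G S (pathSeq x))
  have hT : ∀ x, Measurable (T x) := fun x => ENNReal.measurable_ofReal.comp
    (((measurable_subDeg 0).mul (measurable_seqWeight n _)).mul (hG _))
  have hterm : ∀ x S, ENNReal.ofReal (subDeg S 0 * seqWeight S n (pathSeq x)
      * G (translateSub (-pathSeq x n) S) (revSeq n (pathSeq x)))
        = T (reversePath x) (translateSub (-pathSeq x n) S) := by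
    intro x S
    by_cases hx : x 0 = 0
    · rw [subDeg_mul_seqWeight_revSeq S (by rwa [pathSeq_zero]) n]
      simp only [T, pathSeq_reversePath hx]
    · have hw : ∀ (S' : (ZdGraph d).Subgraph) (x' : Fin (n + 1) → Fin d → ℤ),
          x' 0 = x 0 → seqWeight S' n (pathSeq x') = 0 := fun S' x' h' => by
        rw [seqWeight, pathSeq_zero, h', if_neg hx, zero_mul]
      simp only [T, hw S x rfl, hw _ _ (reversePath_zero x), mul_zero, zero_mul]
  rw [lintegral_congr fun S => (ofReal_subDeg_mul_walkExp S n fun y => hG0 _ _).trans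
      (tsum_congr fun x => hterm x S),
    lintegral_congr fun S => ofReal_subDeg_mul_walkExp S n (hG0 S),
    lintegral_tsum (f := fun x S => T (reversePath x) (translateSub (-pathSeq x n) S))
      fun x => ((hT _).comp (measurable_translateSub _)).aemeasurable,
    lintegral_tsum (f := T) fun x => (hT x).aemeasurable]
  simp only [← lintegral_map (hT _) (measurable_translateSub _), hTI]
  exact (reversePath_involutive n).toPerm.tsum_eq fun x => ∫⁻ S, T x S ∂P

lemma subDeg_mul_walkExp_martBound_le (S : (ZdGraph d).Subgraph) {n : ℕ} (hn : 1 ≤ n) :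
    subDeg S 0 * walkExp S n (martBound S n) ≤ (unitBox d).card * (17 * d * n) := by
  rcases (subDeg S 0).eq_zero_or_pos with h0 | h0
  · rw [h0, Nat.cast_zero, zero_mul]
    positivity
  have hW : walkExp S n (martBound S n) ≤ 17 * d * n := by
    rw [show martBound S n = fun y => ∑ j, (maxAbsMart S n j y ^ 2 + 1) from rfl, walkExp_sum]
    calc ∑ j, walkExp S n (fun y => maxAbsMart S n j y ^ 2 + 1)
          ≤ ∑ _j : Fin d, (16 * n + 1 : ℝ) :=
          Finset.sum_le_sum fun j _ => by
            rw [walkExp_add, walkExp_const h0]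
            linarith [walkExp_maxAbsMart_sq_le h0 j n]
      _ ≤ 17 * d * n := by
          rw [Finset.sum_const, Finset.card_univ, Fintype.card_fin, nsmul_eq_mul]
          have : (1 : ℝ) ≤ n := by exact_mod_cast hn
          nlinarith [(Nat.cast_nonneg d : (0 : ℝ) ≤ d)]
  calc (subDeg S 0 : ℝ) * walkExp S n (martBound S n) ≤ subDeg S 0 * (17 * d * n) :=
        mul_le_mul_of_nonneg_left hW (Nat.cast_nonneg _)
    _ ≤ (unitBox d).card * (17 * d * n) :=
        mul_le_mul_of_nonneg_right (by exact_mod_cast subDeg_le_card_unitBox S 0) (by positivity)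

lemma lintegral_subDeg_mul_walkExp_displacementBound_le {P : Measure (ZdGraph d).Subgraph}
    [IsProbabilityMeasure P] (hTI : ∀ t : Fin d → ℤ, P.map (translateSub t) = P) {n : ℕ}
    (hn : 1 ≤ n) :
    ∫⁻ S, ENNReal.ofReal (subDeg S 0 * walkExp S n (displacementBound S n)) ∂P
      ≤ ENNReal.ofReal (68 * (unitBox d).card * d) * n := by
  have hsplit : ∀ S : (ZdGraph d).Subgraph,
      ENNReal.ofReal (subDeg S 0 * walkExp S n (displacementBound S n))
        ≤ ENNReal.ofReal (subDeg S 0 * walkExp S n (martBound S n)) + 3 * ENNReal.ofReal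
          (subDeg S 0 * walkExp S n fun y => martBound (translateSub (-y n) S) n (revSeq n y)) := by
    intro S
    rw [show displacementBound S n = fun y =>
        martBound S n y + 3 * martBound (translateSub (-y n) S) n (revSeq n y) from rfl,
      walkExp_add, walkExp_const_mul, mul_add, mul_left_comm, ← ENNReal.ofReal_ofNat 3,
      ← ENNReal.ofReal_mul (by norm_num)]
    exact ENNReal.ofReal_add_le
  have hmeas : Measurable fun S : (ZdGraph d).Subgraph =>
      ENNReal.ofReal (subDeg S 0 * walkExp S n (martBound S n)) :=
    ENNReal.measurable_ofReal.comp ((measurable_subDeg 0).mul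
      (measurable_walkExp (measurable_martBound n)))
  calc _ ≤ _ := lintegral_mono hsplit
    _ = 4 * ∫⁻ S, ENNReal.ofReal (subDeg S 0 * walkExp S n (martBound S n)) ∂P := by
        rw [lintegral_add_left hmeas, lintegral_const_mul' _ _ ENNReal.ofNat_ne_top,
          lintegral_subDeg_mul_walkExp_reverse hTI n (G := fun S y => martBound S n y)
            (measurable_martBound n) (fun S y => martBound_nonneg S n y)]
        ring
    _ ≤ 4 * ENNReal.ofReal ((unitBox d).card * (17 * d * n)) := by
        refine mul_le_mul_right ((lintegral_mono fun S =>
          ENNReal.ofReal_le_ofReal (subDeg_mul_walkExp_martBound_le S hn)).trans_eq ?_) _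
        rw [lintegral_const, measure_univ, mul_one]
    _ = ENNReal.ofReal (68 * (unitBox d).card * d) * n := by
        rw [← ENNReal.ofReal_natCast n, ← ENNReal.ofReal_mul (by positivity),
          ← ENNReal.ofReal_ofNat 4, ← ENNReal.ofReal_mul (by norm_num)]
        ring_nf

theorem maximal_displacement_diffusive_bound_general
    (d : ℕ) :
    ∃ C : ℝ≥0∞, C ≠ ⊤ ∧
      ∀ P : Measure (ZdGraph d).Subgraph, IsProbabilityMeasure P →
        (∀ t : Fin d → ℤ, P.map (translateSub t) = P) →
        ∀ μ : Measure ((ZdGraph d).Subgraph × (ℕ → Fin d → ℤ)), IsEnvWalkLaw d P μ →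
          ∀ n : ℕ, 1 ≤ n →
            (∫⁻ ω, (⨆ i ∈ Finset.range (n + 1), ((supNormZ (ω.2 i) : ℝ≥0∞)) ^ 2) ∂μ)
              ≤ C * n := by
  refine ⟨ENNReal.ofReal (68 * (unitBox d).card * d), ENNReal.ofReal_ne_top,
    fun P _ hTI μ hμ n hn => ?_⟩
  calc ∫⁻ ω, maxSupNormSq n ω.2 ∂μ
      = ∫⁻ S, ∑' x : Fin (n + 1) → Fin d → ℤ,
          maxSupNormSq n (pathSeq x) * originCondCyl d S n (pathSeq x) ∂P :=
        lintegral_maxSupNormSq_eq hμ n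
    _ ≤ ∫⁻ S, ENNReal.ofReal (subDeg S 0 * walkExp S n (displacementBound S n)) ∂P :=
        lintegral_mono fun S => tsum_maxSupNormSq_mul_originCondCyl_le S n
          (displacementBound_nonneg S n) fun y hy => maxSupNormSq_le S hy n
    _ ≤ _ := lintegral_subDeg_mul_walkExp_displacementBound_le hTI hn

/-- Proposition 4.6: diffusive maximal displacement bound. For every
`d ≥ 1` there is a constant `C(d) < ∞` such that for every translation-invariant random
subgraph `ω` of `ℤ^d` and the walk `Y` which, conditionally on `ω`, is a simple random walk
started at the origin on the component of the origin (frozen at the origin if the origin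
has no `ω`-neighbour), one has `E[max_{0 ≤ i ≤ n} ‖Y_i‖_∞²] ≤ C(d)·n` for all `n ≥ 1`. -/
theorem maximal_displacement_diffusive_bound
    (d : ℕ) (hd : 1 ≤ d) :
    ∃ C : ℝ≥0∞, C ≠ ⊤ ∧
      ∀ P : Measure (ZdGraph d).Subgraph, IsProbabilityMeasure P →
        (∀ t : Fin d → ℤ, P.map (translateSub t) = P) →
        ∀ μ : Measure ((ZdGraph d).Subgraph × (ℕ → Fin d → ℤ)), IsEnvWalkLaw d P μ →
          ∀ n : ℕ, 1 ≤ n →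
            (∫⁻ ω, (⨆ i ∈ Finset.range (n + 1), ((supNormZ (ω.2 i) : ℝ≥0∞)) ^ 2) ∂μ)
              ≤ C * n :=
  maximal_displacement_diffusive_bound_general d

end ArborealGas

end
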